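/- arXiv:2301.04456 — 4 statements merged into one kernel-verified Lean document; each statement's English description precedes it below -/
import Mathlib

section
/- Let n = 2m, let f : F_{2^n} → F_2 be bent with dual f*, and let a, b ∈ F_{2^n}, a ≠ 0, b ≠ 0. Then the function h(x) = f(x) + Tr(ax)·Tr(bx) is bent if and only if D_a D_b f* = 0 (identically). Moreover, when this holds, the dual of h is h*(x) = f*(x)f*(x+a) + f*(x)f*(x+b) + f*(x+a)f*(x+b). -/
noncomputable section

noncomputable instance (n : ℕ) : Fintype (GaloisField 2 n) := Fintype.ofFinite _

/-- `(-1)^c` for `c ∈ F_2`. -/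
def sgn (c : ZMod 2) : ℤ := if c = 0 then 1 else -1

/-- The absolute trace `Tr : F_{2^n} → F_2`. -/
def Tr {n : ℕ} (x : GaloisField 2 n) : ZMod 2 :=
  Algebra.trace (ZMod 2) (GaloisField 2 n) x

/-- Walsh–Hadamard transform of a Boolean function on `F_{2^n}`. -/
def walsh {n : ℕ} (f : GaloisField 2 n → ZMod 2) (μ : GaloisField 2 n) : ℤ :=
  ∑ x : GaloisField 2 n, sgn (f x + Tr (μ * x))

/-- `f` is bent (where `n = 2m`): all Walsh coefficients are `±2^m`. -/
def IsBent {n : ℕ} (m : ℕ) (f : GaloisField 2 n → ZMod 2) : Prop :=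
  ∀ μ, walsh f μ = 2 ^ m ∨ walsh f μ = -(2 ^ m)

/-- `fs` is the dual of the bent function `f` (where `n = 2m`). -/
def IsDualOf {n : ℕ} (m : ℕ) (fs f : GaloisField 2 n → ZMod 2) : Prop :=
  ∀ μ, walsh f μ = 2 ^ m * sgn (fs μ)

lemma sgn_L1 : ∀ c1 c2 c3 c4 : ZMod 2, c1 + c2 + c3 + c4 = 0 →
    sgn c1 + sgn c2 + sgn c3 - sgn c4 = 2 * sgn (c1 * c2 + c1 * c3 + c2 * c3) := by decide

lemma sgn_L2 : ∀ c1 c2 c3 c4 : ZMod 2, c1 + c2 + c3 + c4 ≠ 0 →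
    sgn c1 + sgn c2 + sgn c3 - sgn c4 ≠ 2 ∧ sgn c1 + sgn c2 + sgn c3 - sgn c4 ≠ -2 := by decide

lemma sgn_cases (c : ZMod 2) : sgn c = 1 ∨ sgn c = -1 := by revert c; decide

lemma sgn_key : ∀ c A B M : ZMod 2, 2 * sgn (c + A * B + M)
    = sgn (c + M) + sgn (c + (M + A)) + sgn (c + (M + B)) - sgn (c + (M + A + B)) := by decide

lemma two_mul_walsh {n : ℕ} (f : GaloisField 2 n → ZMod 2) (a b μ : GaloisField 2 n) :
    2 * walsh (fun x => f x + Tr (a * x) * Tr (b * x)) μ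
      = walsh f μ + walsh f (μ + a) + walsh f (μ + b) - walsh f (μ + a + b) := by
  unfold walsh
  rw [Finset.mul_sum, ← Finset.sum_add_distrib, ← Finset.sum_add_distrib,
    ← Finset.sum_sub_distrib]
  apply Finset.sum_congr rfl
  intro x _
  have hT : ∀ u v : GaloisField 2 n, Tr ((u + v) * x) = Tr (u * x) + Tr (v * x) := by
    intro u v; unfold Tr; rw [add_mul, map_add]
  rw [hT μ a, hT μ b, hT (μ + a) b, hT μ a]
  beta_reduce
  exact sgn_key (f x) (Tr (a * x)) (Tr (b * x)) (Tr (μ * x))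

/-- Mesnager: `h(x) = f(x) + Tr(ax)Tr(bx)` is bent iff `D_a D_b f* = 0`; in that case its dual is
`f*(x)f*(x+a) + f*(x)f*(x+b) + f*(x+a)f*(x+b)`. -/
theorem statement1 {n m : ℕ} (hn : n = 2 * m)
    (f fs : GaloisField 2 n → ZMod 2) (hf : IsBent m f) (hfd : IsDualOf m fs f)
    (a b : GaloisField 2 n) (ha : a ≠ 0) (hb : b ≠ 0) :
    (IsBent m (fun x => f x + Tr (a * x) * Tr (b * x)) ↔
      ∀ x, fs x + fs (x + a) + fs (x + b) + fs (x + a + b) = 0) ∧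
    ((∀ x, fs x + fs (x + a) + fs (x + b) + fs (x + a + b) = 0) →
      IsDualOf m (fun x => fs x * fs (x + a) + fs x * fs (x + b) + fs (x + a) * fs (x + b))
        (fun x => f x + Tr (a * x) * Tr (b * x))) := by
  have hpow : (2 : ℤ) ^ m ≠ 0 := pow_ne_zero m two_ne_zero
  have key : ∀ μ, 2 * walsh (fun x => f x + Tr (a * x) * Tr (b * x)) μ
      = 2 ^ m * (sgn (fs μ) + sgn (fs (μ + a)) + sgn (fs (μ + b)) - sgn (fs (μ + a + b))) := by
    intro μ
    rw [two_mul_walsh, hfd μ, hfd (μ + a), hfd (μ + b), hfd (μ + a + b)]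
    ring
  have dual : (∀ x, fs x + fs (x + a) + fs (x + b) + fs (x + a + b) = 0) →
      IsDualOf m (fun x => fs x * fs (x + a) + fs x * fs (x + b) + fs (x + a) * fs (x + b))
        (fun x => f x + Tr (a * x) * Tr (b * x)) := by
    intro hD μ
    have hk := key μ
    rw [sgn_L1 _ _ _ _ (hD μ)] at hk
    have h2 : 2 * walsh (fun x => f x + Tr (a * x) * Tr (b * x)) μ
        = 2 * (2 ^ m * sgn (fs μ * fs (μ + a) + fs μ * fs (μ + b) + fs (μ + a) * fs (μ + b))) := by
      rw [hk]; ring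
    exact mul_left_cancel₀ two_ne_zero h2
  refine ⟨⟨?_, ?_⟩, dual⟩
  · intro hbent x
    by_contra hx
    have hT := sgn_L2 (fs x) (fs (x + a)) (fs (x + b)) (fs (x + a + b)) hx
    have hk := key x
    rcases hbent x with hw | hw
    · apply hT.1
      apply mul_left_cancel₀ hpow
      rw [← hk, hw]; ring
    · apply hT.2
      apply mul_left_cancel₀ hpow
      rw [← hk, hw]; ring
  · intro hD μ
    have := dual hD μ
    rw [this]
    rcases sgn_cases (fs μ * fs (μ + a) + fs μ * fs (μ + b) + fs (μ + a) * fs (μ + b)) with h | h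
    · left; rw [h, mul_one]
    · right; rw [h]; ring
end
end

section
/- Let n = 2m and let f : F_{2^n} → F_2 be bent with dual f*. Let μ_1, …, μ_r ∈ F_{2^n} be nonzero elements such that D_{μ_i} D_{μ_j} f* = 0 (identically) for all 1 ≤ i < j ≤ r. Then for every Boolean function F : F_2^r → F_2, the function h(x) = f(x) + F(Tr(μ_1 x), …, Tr(μ_r x)) is bent, with dual h*(x) = f*(x) + F(φ_1(x), …, φ_r(x)), where φ_i(x) = f*(x) + f*(x + μ_i) for each i. -/
noncomputable section

lemma sgn_add (a b : ZMod 2) : sgn (a + b) = sgn a * sgn b := by revert a b; decide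
lemma sgn_add_one (a : ZMod 2) : sgn (a + 1) = -sgn a := by revert a; decide
lemma sgn_eq (a : ZMod 2) : sgn a = 1 ∨ sgn a = -1 := by
  unfold sgn; split <;> simp
lemma zmod2_eq_one {a : ZMod 2} (h : a ≠ 0) : a = 1 := by revert a; decide
lemma zmod2_add_eq_zero {a b : ZMod 2} : a + b = 0 ↔ a = b := by revert a b; decide

lemma sum_sgn_dot {r : ℕ} (v : Fin r → ZMod 2) :
    ∑ ω : Fin r → ZMod 2, sgn (∑ i, ω i * v i) = if v = 0 then 2 ^ r else 0 := by
  split_ifs with hv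
  · subst hv
    simp [sgn, Finset.card_univ]
  · obtain ⟨j, hj0⟩ := Function.ne_iff.mp hv
    have hj : v j = 1 := zmod2_eq_one hj0
    set σ : (Fin r → ZMod 2) → (Fin r → ZMod 2) :=
      fun ω => Function.update ω j (ω j + 1) with hσ
    have hinv : Function.Involutive σ := by
      intro ω; funext i
      by_cases hij : i = j
      · subst hij
        simp only [hσ, Function.update_self]
        have h2 : (1:ZMod 2) + 1 = 0 := rfl
        rw [add_assoc, h2, add_zero]
      · simp [hσ, Function.update, hij]
    have hkey : ∀ ω : Fin r → ZMod 2,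
        (∑ i, σ ω i * v i) = (∑ i, ω i * v i) + 1 := by
      intro ω
      have : ∀ i, σ ω i * v i = ω i * v i + (if i = j then (1:ZMod 2) else 0) := by
        intro i
        by_cases hij : i = j
        · subst hij; simp [hσ, Function.update, add_mul, hj]
        · simp [hσ, Function.update, hij]
      simp only [this, Finset.sum_add_distrib, Finset.sum_ite_eq' Finset.univ j]
      simp
    have hre : ∑ ω : Fin r → ZMod 2, sgn (∑ i, ω i * v i)
        = ∑ ω : Fin r → ZMod 2, sgn (∑ i, σ ω i * v i) :=
      (Function.Bijective.sum_comp hinv.bijective _).symm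
    have : ∑ ω : Fin r → ZMod 2, sgn (∑ i, ω i * v i)
        = - ∑ ω : Fin r → ZMod 2, sgn (∑ i, ω i * v i) := by
      calc ∑ ω : Fin r → ZMod 2, sgn (∑ i, ω i * v i)
          = ∑ ω : Fin r → ZMod 2, sgn (∑ i, σ ω i * v i) := hre
        _ = ∑ ω : Fin r → ZMod 2, -sgn (∑ i, ω i * v i) :=
            Finset.sum_congr rfl (fun ω _ => by rw [hkey ω, sgn_add_one])
        _ = - ∑ ω : Fin r → ZMod 2, sgn (∑ i, ω i * v i) := by
            rw [Finset.sum_neg_distrib]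
    linarith

lemma inversion {r : ℕ} (F : (Fin r → ZMod 2) → ZMod 2) (z : Fin r → ZMod 2) :
    ∑ ω : Fin r → ZMod 2,
        (∑ y : Fin r → ZMod 2, sgn (F y + ∑ i, ω i * y i)) * sgn (∑ i, ω i * z i)
      = 2 ^ r * sgn (F z) := by
  calc ∑ ω : Fin r → ZMod 2,
        (∑ y : Fin r → ZMod 2, sgn (F y + ∑ i, ω i * y i)) * sgn (∑ i, ω i * z i)
      = ∑ ω : Fin r → ZMod 2, ∑ y : Fin r → ZMod 2,
          sgn (F y) * sgn (∑ i, ω i * (y i + z i)) := by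
        refine Finset.sum_congr rfl fun ω _ => ?_
        rw [Finset.sum_mul]
        refine Finset.sum_congr rfl fun y _ => ?_
        rw [sgn_add, mul_assoc, ← sgn_add, ← Finset.sum_add_distrib]
        congr 1
        congr 1
        exact Finset.sum_congr rfl fun i _ => by ring
    _ = ∑ y : Fin r → ZMod 2, sgn (F y) *
          ∑ ω : Fin r → ZMod 2, sgn (∑ i, ω i * (y i + z i)) := by
        rw [Finset.sum_comm]
        exact Finset.sum_congr rfl fun y _ => by rw [Finset.mul_sum]
    _ = ∑ y : Fin r → ZMod 2, sgn (F y) *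
          (if (fun i => y i + z i) = 0 then (2:ℤ) ^ r else 0) := by
        refine Finset.sum_congr rfl fun y _ => ?_
        rw [sum_sgn_dot]
    _ = 2 ^ r * sgn (F z) := by
        have hcond : ∀ y : Fin r → ZMod 2, ((fun i => y i + z i) = 0) ↔ y = z := by
          intro y
          constructor
          · intro h; funext i
            exact zmod2_add_eq_zero.mp (congrFun h i)
          · intro h; subst h; funext i
            exact zmod2_add_eq_zero.mpr rfl
        simp only [hcond, mul_ite, mul_zero]
        rw [Finset.sum_ite_eq' Finset.univ z]
        simp [mul_comm]

lemma shift {n r : ℕ} (fs : GaloisField 2 n → ZMod 2) (μ : Fin r → GaloisField 2 n)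
    (hD' : ∀ i j : Fin r, i ≠ j →
      ∀ x, fs x + fs (x + μ i) + fs (x + μ j) + fs (x + μ i + μ j) = 0)
    (ω : Fin r → ZMod 2) (S : Finset (Fin r)) :
    ∀ x, fs (x + ∑ i ∈ S, ω i • μ i) = fs x + ∑ i ∈ S, ω i * (fs x + fs (x + μ i)) := by
  induction S using Finset.induction with
  | empty => simp
  | @insert a S ha ih =>
    intro x
    rw [Finset.sum_insert ha, Finset.sum_insert ha, ← add_assoc,
      ih (x + ω a • μ a)]
    by_cases h0 : ω a = 0
    · simp [h0]
    · have h1 : ω a = 1 := zmod2_eq_one h0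
      have hmem : ∀ i ∈ S, ω i * (fs (x + μ a) + fs (x + μ a + μ i))
          = ω i * (fs x + fs (x + μ i)) := by
        intro i hi
        have hia : a ≠ i := fun h => ha (h ▸ hi)
        have := hD' a i hia x
        have hE : fs (x + μ a) + fs (x + μ a + μ i) = fs x + fs (x + μ i) := by
          have h2 : ∀ u : ZMod 2, u + u = 0 := by decide
          linear_combination this - h2 (fs x) - h2 (fs (x + μ i))
        rw [hE]
      rw [h1, one_smul, Finset.sum_congr rfl hmem, one_mul]
      have h2 : ∀ u : ZMod 2, u + u = 0 := by decide
      linear_combination -h2 (fs x)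

lemma Tr_add {n : ℕ} (a b : GaloisField 2 n) : Tr (a + b) = Tr a + Tr b := by
  unfold Tr; exact map_add _ a b

lemma Tr_smul {n : ℕ} (c : ZMod 2) (a : GaloisField 2 n) : Tr (c • a) = c * Tr a := by
  unfold Tr
  rw [map_smul, smul_eq_mul]

lemma Tr_dot {n r : ℕ} (ω : Fin r → ZMod 2) (μ : Fin r → GaloisField 2 n)
    (x : GaloisField 2 n) :
    (∑ i, ω i * Tr (μ i * x)) = Tr ((∑ i, ω i • μ i) * x) := by
  rw [Finset.sum_mul]
  have h1 : ∀ i : Fin r, (ω i • μ i) * x = ω i • (μ i * x) :=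
    fun i => smul_mul_assoc _ _ _
  simp only [h1]
  have h2 : Tr (∑ i, ω i • (μ i * x)) = ∑ i, Tr (ω i • (μ i * x)) := by
    unfold Tr; exact map_sum _ _ _
  rw [h2]
  exact Finset.sum_congr rfl fun i _ => (Tr_smul _ _).symm

/-- Zheng et al.: if `D_{μ_i}D_{μ_j} f* = 0` for all `i < j`, then for every `F`,
`h(x) = f(x) + F(Tr(μ_1 x), …, Tr(μ_r x))` is bent with dual
`f*(x) + F(φ_1(x), …, φ_r(x))` where `φ_i(x) = f*(x) + f*(x+μ_i)`. -/
theorem statement4 {n m r : ℕ} (hn : n = 2 * m)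
    (f fs : GaloisField 2 n → ZMod 2) (hf : IsBent m f) (hfd : IsDualOf m fs f)
    (μ : Fin r → GaloisField 2 n) (hμ : ∀ i, μ i ≠ 0)
    (hD : ∀ i j : Fin r, i < j →
      ∀ x, fs x + fs (x + μ i) + fs (x + μ j) + fs (x + μ i + μ j) = 0)
    (F : (Fin r → ZMod 2) → ZMod 2) :
    IsBent m (fun x => f x + F (fun i => Tr (μ i * x))) ∧
      IsDualOf m (fun x => fs x + F (fun i => fs x + fs (x + μ i)))
        (fun x => f x + F (fun i => Tr (μ i * x))) := by
  have hD' : ∀ i j : Fin r, i ≠ j →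
      ∀ x, fs x + fs (x + μ i) + fs (x + μ j) + fs (x + μ i + μ j) = 0 := by
    intro i j hij x
    rcases lt_or_gt_of_ne hij with h | h
    · exact hD i j h x
    · have := hD j i h x
      rw [add_right_comm x (μ j) (μ i)] at this
      linear_combination this
  have key : ∀ lam, walsh (fun x => f x + F fun i => Tr (μ i * x)) lam
      = 2 ^ m * sgn (fs lam + F (fun i => fs lam + fs (lam + μ i))) := by
    intro lam
    have h2r : ((2:ℤ) ^ r) ≠ 0 := by positivity
    apply mul_left_cancel₀ h2r
    calc (2:ℤ) ^ r * walsh (fun x => f x + F fun i => Tr (μ i * x)) lam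
        = ∑ x : GaloisField 2 n, sgn (f x + Tr (lam * x)) *
            ((2:ℤ) ^ r * sgn (F (fun i => Tr (μ i * x)))) := by
          rw [walsh, Finset.mul_sum]
          refine Finset.sum_congr rfl fun x _ => ?_
          rw [show f x + F (fun i => Tr (μ i * x)) + Tr (lam * x)
              = (f x + Tr (lam * x)) + F (fun i => Tr (μ i * x)) by ring, sgn_add]
          ring
      _ = ∑ x : GaloisField 2 n, ∑ ω : Fin r → ZMod 2,
            (∑ y : Fin r → ZMod 2, sgn (F y + ∑ i, ω i * y i)) *
              (sgn (f x + Tr (lam * x)) * sgn (∑ i, ω i * Tr (μ i * x))) := by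
          refine Finset.sum_congr rfl fun x _ => ?_
          rw [← inversion F (fun i => Tr (μ i * x)), Finset.mul_sum]
          exact Finset.sum_congr rfl fun ω _ => by ring
      _ = ∑ ω : Fin r → ZMod 2,
            (∑ y : Fin r → ZMod 2, sgn (F y + ∑ i, ω i * y i)) *
              ∑ x : GaloisField 2 n,
                sgn (f x + Tr (lam * x)) * sgn (∑ i, ω i * Tr (μ i * x)) := by
          rw [Finset.sum_comm]
          exact Finset.sum_congr rfl fun ω _ => by rw [Finset.mul_sum]
      _ = ∑ ω : Fin r → ZMod 2,
            (∑ y : Fin r → ZMod 2, sgn (F y + ∑ i, ω i * y i)) *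
              walsh f (lam + ∑ i, ω i • μ i) := by
          refine Finset.sum_congr rfl fun ω _ => ?_
          congr 1
          rw [walsh]
          refine Finset.sum_congr rfl fun x _ => ?_
          rw [← sgn_add, Tr_dot, add_assoc, ← Tr_add, ← add_mul]
      _ = ∑ ω : Fin r → ZMod 2,
            (∑ y : Fin r → ZMod 2, sgn (F y + ∑ i, ω i * y i)) *
              (2 ^ m * (sgn (fs lam) *
                sgn (∑ i, ω i * (fs lam + fs (lam + μ i))))) := by
          refine Finset.sum_congr rfl fun ω _ => ?_
          rw [hfd (lam + ∑ i, ω i • μ i), shift fs μ hD' ω Finset.univ lam,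
            sgn_add]
      _ = (2 ^ m * sgn (fs lam)) * ∑ ω : Fin r → ZMod 2,
            (∑ y : Fin r → ZMod 2, sgn (F y + ∑ i, ω i * y i)) *
              sgn (∑ i, ω i * (fs lam + fs (lam + μ i))) := by
          rw [Finset.mul_sum]
          exact Finset.sum_congr rfl fun ω _ => by ring
      _ = (2 ^ m * sgn (fs lam)) *
            (2 ^ r * sgn (F (fun i => fs lam + fs (lam + μ i)))) := by
          rw [inversion F (fun i => fs lam + fs (lam + μ i))]
      _ = 2 ^ r * (2 ^ m * sgn (fs lam + F (fun i => fs lam + fs (lam + μ i)))) := by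
          rw [sgn_add]
          ring
  refine ⟨fun lam => ?_, fun lam => key lam⟩
  rcases sgn_eq (fs lam + F (fun i => fs lam + fs (lam + μ i))) with h | h
  · left; rw [key lam, h, mul_one]
  · right; rw [key lam, h]; ring
end
end

section
/- Let n = 2m, let f : F_{2^n} → F_2 be bent with dual f*, let μ_1, …, μ_r ∈ F_{2^n} be nonzero, and let φ : F_{2^n} → F_2^r be given by φ(x) = (Tr(μ_1 x), …, Tr(μ_r x)). Then the following are equivalent: (1) there exists φ' = (φ'_1,…,φ'_r) : F_{2^n} → F_2^r such that for every ω ∈ F_2^r and every β ∈ F_{2^n}, the Walsh–Hadamard transform of x ↦ f(x) + ω·φ(x) at β equals 2^m·(-1)^{f*(β) + ω·φ'(β)}; (2) D_{μ_i} D_{μ_j} f* = 0 (identically) for all 1 ≤ i < j ≤ r. -/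
/-!
Adding `ω·φ` to `f` translates its Walsh transform by `∑ ωᵢ μᵢ`, so by duality (1) says that
`f*(β + ∑ ωᵢ μᵢ) = f*(β) + ∑ ωᵢ φ'ᵢ(β)`: on each coset `β + ⟨μ₁, …, μᵣ⟩`, `f*` is affine in the
coordinates `ω`. Over `F₂` this holds exactly when all second derivatives `D_{μᵢ} D_{μⱼ} f*`
vanish, and then `φ'ᵢ = D_{μᵢ} f*`.
-/

noncomputable section

open Finset

theorem ZMod.two_smul_eq_ite {M : Type*} [AddCommGroup M] [Module (ZMod 2) M] (c : ZMod 2)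
    (v : M) : c • v = if c = 1 then v else 0 := by
  obtain rfl | rfl : c = 0 ∨ c = 1 := by revert c; decide
  all_goals simp

section SecondDiff

variable {G ι : Type*} [AddCommGroup G]

def secondDiff (g : G → ZMod 2) (a b x : G) : ZMod 2 :=
  g x + g (x + a) + g (x + b) + g (x + a + b)

theorem secondDiff_comm (g : G → ZMod 2) (a b x : G) :
    secondDiff g a b x = secondDiff g b a x := by
  rw [secondDiff, secondDiff, add_right_comm x a b]
  ring

theorem secondDiff_self [Module (ZMod 2) G] (g : G → ZMod 2) (a x : G) :
    secondDiff g a a x = 0 := by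
  have haa : x + a + a = x := by
    rw [add_assoc, ← two_smul (ZMod 2), show (2 : ZMod 2) = 0 from rfl, zero_smul, add_zero]
  rw [secondDiff, haa]
  ring_nf; reduce_mod_char

theorem secondDiff_eq_zero_iff_forall_lt [Module (ZMod 2) G] [LinearOrder ι]
    (g : G → ZMod 2) (μ : ι → G) :
    (∀ i j, i < j → ∀ x, secondDiff g (μ i) (μ j) x = 0) ↔
      ∀ i j x, secondDiff g (μ i) (μ j) x = 0 := by
  refine ⟨fun h i j x => ?_, fun h i j _ => h i j⟩
  rcases lt_trichotomy i j with hij | rfl | hij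
  · exact h i j hij x
  · exact secondDiff_self g (μ i) x
  · rw [secondDiff_comm]
    exact h j i hij x

theorem add_sum_eq_of_secondDiff_eq_zero [DecidableEq ι] {g : G → ZMod 2} {μ : ι → G}
    (hD : ∀ i j x, secondDiff g (μ i) (μ j) x = 0) (S : Finset ι) (β : G) :
    g (β + ∑ k ∈ S, μ k) = g β + ∑ k ∈ S, (g β + g (β + μ k)) := by
  induction S using Finset.induction_on generalizing β with
  | empty => simp
  | insert a S ha ih =>
    have hshift (k : ι) : g (β + μ a) + g (β + μ a + μ k) = g β + g (β + μ k) := by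
      have := hD a k β
      rw [secondDiff] at this
      grind
    rw [sum_insert ha, sum_insert ha, ← add_assoc, ih, sum_congr rfl fun k _ => hshift k]
    ring_nf; reduce_mod_char

theorem exists_affine_iff_secondDiff_eq_zero [Module (ZMod 2) G] [Fintype ι]
    (g : G → ZMod 2) (μ : ι → G) :
    (∃ φ' : ι → G → ZMod 2, ∀ (ω : ι → ZMod 2) β,
      g (β + ∑ i, ω i • μ i) = g β + ∑ i, ω i * φ' i β) ↔
    ∀ i j x, secondDiff g (μ i) (μ j) x = 0 := by
  classical
  constructor
  · rintro ⟨φ', hφ'⟩ i j x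
    have hi := hφ' (Pi.single i 1) x
    have hj := hφ' (Pi.single j 1) x
    have hij := hφ' (Pi.single i 1 + Pi.single j 1) x
    simp only [Pi.add_apply, add_smul, add_mul, sum_add_distrib, Pi.single_apply, ite_smul,
      ite_mul, one_smul, zero_smul, one_mul, zero_mul, sum_ite_eq', mem_univ, if_true] at hi hj hij
    rw [← add_assoc] at hij
    rw [secondDiff, hi, hj, hij]
    ring_nf; reduce_mod_char
  · intro hD
    refine ⟨fun i x => g x + g (x + μ i), fun ω β => ?_⟩
    simp only [← smul_eq_mul (ω _), ZMod.two_smul_eq_ite, ← sum_filter]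
    exact add_sum_eq_of_secondDiff_eq_zero hD _ β

end SecondDiff

theorem sgn_inj {a b : ZMod 2} : sgn a = sgn b ↔ a = b := by
  revert a b; decide

theorem walsh_add_sum_mul_Tr {n : ℕ} {ι : Type*} [Fintype ι] (f : GaloisField 2 n → ZMod 2)
    (μ : ι → GaloisField 2 n) (ω : ι → ZMod 2) (β : GaloisField 2 n) :
    walsh (fun x => f x + ∑ i, ω i * Tr (μ i * x)) β = walsh f (β + ∑ i, ω i • μ i) := by
  refine sum_congr rfl fun x _ => congrArg sgn ?_
  simp only [Tr, add_mul, sum_mul, smul_mul_assoc, map_add, map_sum, map_smul, smul_eq_mul]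
  ring

theorem IsDualOf.walsh_eq_iff {n m : ℕ} {fs f : GaloisField 2 n → ZMod 2}
    (h : IsDualOf m fs f) (μ : GaloisField 2 n) (c : ZMod 2) :
    walsh f μ = 2 ^ m * sgn c ↔ fs μ = c := by
  rw [h μ, mul_right_inj' (by positivity), sgn_inj]

theorem statement7_general {n m r : ℕ}
    (f fs : GaloisField 2 n → ZMod 2) (hfd : IsDualOf m fs f)
    (μ : Fin r → GaloisField 2 n) :
    (∃ φ' : Fin r → (GaloisField 2 n → ZMod 2),
      ∀ (ω : Fin r → ZMod 2) (β : GaloisField 2 n),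
        walsh (fun x => f x + ∑ i, ω i * Tr (μ i * x)) β
          = 2 ^ m * sgn (fs β + ∑ i, ω i * φ' i β)) ↔
    (∀ i j : Fin r, i < j →
      ∀ x, fs x + fs (x + μ i) + fs (x + μ j) + fs (x + μ i + μ j) = 0) := by
  simp only [walsh_add_sum_mul_Tr, hfd.walsh_eq_iff]
  exact (exists_affine_iff_secondDiff_eq_zero fs μ).trans
    (secondDiff_eq_zero_iff_forall_lt fs μ).symm

/-- For `φ_i(x) = Tr(μ_i x)` with `f` bent with dual `f*`, property `P_r` holds (there is `φ'`
with each `f + ω·φ` bent of dual `f* + ω·φ'`) iff `D_{μ_i}D_{μ_j} f* = 0` for all `i < j`. -/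
theorem statement7 {n m r : ℕ} (hn : n = 2 * m)
    (f fs : GaloisField 2 n → ZMod 2) (hf : IsBent m f) (hfd : IsDualOf m fs f)
    (μ : Fin r → GaloisField 2 n) (hμ : ∀ i, μ i ≠ 0) :
    (∃ φ' : Fin r → (GaloisField 2 n → ZMod 2),
      ∀ (ω : Fin r → ZMod 2) (β : GaloisField 2 n),
        walsh (fun x => f x + ∑ i, ω i * Tr (μ i * x)) β
          = 2 ^ m * sgn (fs β + ∑ i, ω i * φ' i β)) ↔
    (∀ i j : Fin r, i < j →
      ∀ x, fs x + fs (x + μ i) + fs (x + μ j) + fs (x + μ i + μ j) = 0) :=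
  statement7_general f fs hfd μ
end
end

section
/- Let n = 2m, let f and g be bent functions on F_{2^n} with duals f* and g* respectively, and let μ_2, …, μ_r ∈ F_{2^n} be nonzero. Assume: (A) D_{μ_i} D_{μ_j} f* = 0 (identically) for all 2 ≤ i < j ≤ r; (B) for every (ω_2,…,ω_r) ∈ F_2^{r-1} and every x ∈ F_{2^n}, g*(x + ∑_{i=2}^r ω_i μ_i) = g*(x) + (∑_{i=2}^r ω_i)·f*(x) + ∑_{i=2}^r ω_i f*(x + μ_i), where the coefficient ∑_{i=2}^r ω_i is computed in F_2 (so the term f*(x) appears exactly when the weight of (ω_2,…,ω_r) is odd). Then for every Boolean function F : F_2^r → F_2, the function h(x) = f(x) + F(f(x)+g(x), Tr(μ_2 x), Tr(μ_3 x), …, Tr(μ_r x)) is bent, with dual h*(x) = f*(x) + F(φ_1(x), …, φ_r(x)), where φ_1(x) = f*(x) + g*(x) and φ_i(x) = f*(x) + f*(x + μ_i) for 2 ≤ i ≤ r. -/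
noncomputable section

lemma zmod2_cases (c : ZMod 2) : c = 0 ∨ c = 1 := by revert c; decide

lemma zmod2_solve1 (a b c d : ZMod 2) (h : a + b + c + d = 0) : c + d = a + b := by
  revert a b c d; decide

lemma zmod2_solve2 (a b c d : ZMod 2) (h : a + b + c + d = 0) : b + d = a + c := by
  revert a b c d; decide

lemma zmod2_solve3 (a b t : ZMod 2) : b + t = a + (a + b + t) := by revert a b t; decide

lemma sgn_gs_helper (a b d : ZMod 2) : sgn (b + d) = sgn a * sgn (a + b + d) := by
  revert a b d; decide

lemma sgn_sum {ι : Type*} (s : Finset ι) (a : ι → ZMod 2) :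
    sgn (∑ i ∈ s, a i) = ∏ i ∈ s, sgn (a i) := by
  induction s using Finset.cons_induction with
  | empty => simp [sgn]
  | cons j s hj ih => rw [Finset.sum_cons, Finset.prod_cons, sgn_add, ih]

lemma sum_sgn_mul (w : ZMod 2) : (∑ c : ZMod 2, sgn (c * w)) = if w = 0 then 2 else 0 := by
  revert w; decide

lemma orth {r : ℕ} (w : Fin r → ZMod 2) :
    (∑ u : Fin r → ZMod 2, sgn (∑ i, u i * w i)) = if w = 0 then 2 ^ r else 0 := by
  simp_rw [sgn_sum]
  rw [← Fintype.piFinset_univ, ← Finset.prod_univ_sum (fun _ => Finset.univ)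
    (fun i c => sgn (c * w i))]
  by_cases hw : w = 0
  · subst hw; simp [sum_sgn_mul, sgn]
  · simp only [hw, if_false]
    obtain ⟨i, hi⟩ := Function.ne_iff.mp hw
    apply Finset.prod_eq_zero (Finset.mem_univ i)
    rw [sum_sgn_mul, if_neg (by simpa using hi)]

lemma fourier2 {r : ℕ} (F : (Fin r → ZMod 2) → ZMod 2) (y : Fin r → ZMod 2) :
    (∑ u : Fin r → ZMod 2, (∑ z : Fin r → ZMod 2, sgn (F z + ∑ i, u i * z i))
      * sgn (∑ i, u i * y i)) = 2 ^ r * sgn (F y) := by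
  have key : ∀ (u z : Fin r → ZMod 2),
      sgn (F z + ∑ i, u i * z i) * sgn (∑ i, u i * y i)
        = sgn (F z) * sgn (∑ i, u i * (z + y) i) := by
    intro u z
    rw [sgn_add, mul_assoc, ← sgn_add, ← Finset.sum_add_distrib]
    congr 2
    exact Finset.sum_congr rfl fun i _ => by simp [mul_add]
  simp_rw [Finset.sum_mul, key]
  rw [Finset.sum_comm]
  have : ∀ z : Fin r → ZMod 2,
      (∑ u : Fin r → ZMod 2, sgn (F z) * sgn (∑ i, u i * (z + y) i))
        = sgn (F z) * (if z + y = 0 then 2 ^ r else 0) := by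
    intro z; rw [← Finset.mul_sum, orth]
  simp_rw [this]
  have hyy : y + y = 0 := by funext i; simp [CharTwo.add_self_eq_zero]
  have hiff : ∀ z : Fin r → ZMod 2, z + y = 0 ↔ z = y := by
    intro z
    constructor
    · intro h
      have h2 : z + y + y = y := by rw [h, zero_add]
      rwa [add_assoc, hyy, add_zero] at h2
    · intro h; rw [h, hyy]
  simp_rw [mul_ite, mul_zero, hiff]
  rw [Finset.sum_ite_eq' Finset.univ y (fun z => sgn (F z) * 2 ^ r)]
  simp [mul_comm]

lemma deriv_shift {G : Type*} [AddCommGroup G] {k : ℕ} (fs : G → ZMod 2) (μ : Fin k → G)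
    (hA : ∀ i j : Fin k, i < j →
      ∀ x, fs x + fs (x + μ i) + fs (x + μ j) + fs (x + μ i + μ j) = 0)
    (S : Finset (Fin k)) :
    ∀ x : G, fs (x + ∑ i ∈ S, μ i) = fs x + ∑ i ∈ S, (fs x + fs (x + μ i)) := by
  induction S using Finset.cons_induction with
  | empty => intro x; simp
  | cons j S hj ih =>
    intro x
    rw [Finset.sum_cons, Finset.sum_cons, ← add_assoc, ih (x + μ j)]
    have hterm : ∀ i ∈ S, fs (x + μ j) + fs (x + μ j + μ i) = fs x + fs (x + μ i) := by
      intro i hi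
      have hij : i ≠ j := fun hcontra => hj (hcontra ▸ hi)
      rcases hij.lt_or_gt with hlt | hlt
      · have h0 := hA i j hlt x
        rw [add_right_comm x (μ j) (μ i)]
        exact zmod2_solve1 _ _ _ _ h0
      · have h0 := hA j i hlt x
        exact zmod2_solve2 _ _ _ _ h0
    rw [Finset.sum_congr rfl hterm]
    exact zmod2_solve3 _ _ _

lemma deriv_omega {G : Type*} [AddCommGroup G] {k : ℕ} (fs : G → ZMod 2) (μ : Fin k → G)
    (hA : ∀ i j : Fin k, i < j →
      ∀ x, fs x + fs (x + μ i) + fs (x + μ j) + fs (x + μ i + μ j) = 0)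
    (ω : Fin k → ZMod 2) (x : G) :
    fs (x + ∑ i, if ω i = 1 then μ i else 0)
      = fs x + ∑ i, ω i * (fs x + fs (x + μ i)) := by
  have h1 : (∑ i, if ω i = 1 then μ i else 0)
      = ∑ i ∈ Finset.univ.filter (fun i => ω i = 1), μ i := (Finset.sum_filter _ _).symm
  rw [h1, deriv_shift fs μ hA _ x, Finset.sum_filter]
  congr 1
  apply Finset.sum_congr rfl
  intro i _
  rcases zmod2_cases (ω i) with h | h
  · rw [h]; norm_num
  · rw [h]; norm_num

lemma main_dual {n m k : ℕ} (f fs g gs : GaloisField 2 n → ZMod 2)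
    (hfd : IsDualOf m fs f) (hgd : IsDualOf m gs g)
    (μ : Fin k → GaloisField 2 n)
    (hAs : ∀ (ω : Fin k → ZMod 2) (x : GaloisField 2 n),
      fs (x + ∑ i, if ω i = 1 then μ i else 0)
        = fs x + ∑ i, ω i * (fs x + fs (x + μ i)))
    (hBs : ∀ (ω : Fin k → ZMod 2) (x : GaloisField 2 n),
      gs (x + ∑ i, if ω i = 1 then μ i else 0)
        = gs x + ∑ i, ω i * (fs x + fs (x + μ i)))
    (F : (Fin (k + 1) → ZMod 2) → ZMod 2) (ν : GaloisField 2 n) :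
    walsh (fun x => f x + F (Fin.cons (f x + g x) (fun i => Tr (μ i * x)))) ν
      = 2 ^ m * sgn (fs ν + F (Fin.cons (fs ν + gs ν) (fun i => fs ν + fs (ν + μ i)))) := by
  set φν : Fin (k + 1) → ZMod 2 :=
    Fin.cons (fs ν + gs ν) (fun i => fs ν + fs (ν + μ i)) with hφ
  -- inner claim
  have inner : ∀ u : Fin (k + 1) → ZMod 2,
      (∑ x : GaloisField 2 n, sgn ((f x + Tr (ν * x)) +
          ∑ i : Fin (k + 1),
            u i * (Fin.cons (f x + g x) (fun j => Tr (μ j * x)) : Fin (k + 1) → ZMod 2) i))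
        = 2 ^ m * (sgn (fs ν) * sgn (∑ i : Fin (k + 1), u i * φν i)) := by
    intro u
    set s : GaloisField 2 n := ∑ i, if u i.succ = 1 then μ i else 0 with hs
    have htr : ∀ x : GaloisField 2 n,
        (∑ i : Fin k, u i.succ * Tr (μ i * x)) = Tr (s * x) := by
      intro x
      have hsx : s * x = ∑ i, (if u i.succ = 1 then μ i else 0) * x := by
        rw [hs, Finset.sum_mul]
      rw [hsx]
      simp only [Tr]
      rw [map_sum]
      apply Finset.sum_congr rfl
      intro i _
      rcases zmod2_cases (u i.succ) with h | h
      · rw [h]; simp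
      · rw [h]; simp
    have hdot : ∀ x : GaloisField 2 n,
        ((f x + Tr (ν * x)) +
            ∑ i : Fin (k + 1),
              u i * (Fin.cons (f x + g x) (fun j => Tr (μ j * x)) : Fin (k + 1) → ZMod 2) i)
          = (if u 0 = 1 then g x else f x) + Tr ((ν + s) * x) := by
      intro x
      rw [Fin.sum_univ_succ]
      simp only [Fin.cons_zero, Fin.cons_succ]
      rw [htr x]
      have hT : Tr ((ν + s) * x) = Tr (ν * x) + Tr (s * x) := by
        simp only [Tr, add_mul, map_add]
      rw [hT]
      rcases zmod2_cases (u 0) with h | h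
      · rw [h, if_neg (by decide : ¬((0 : ZMod 2) = 1))]
        ring
      · rw [h, if_pos rfl]
        generalize f x = a
        generalize g x = b
        generalize Tr (ν * x) = c
        generalize Tr (s * x) = d
        revert a b c d; decide
    rw [Finset.sum_congr rfl fun x _ => by rw [hdot x]]
    rcases zmod2_cases (u 0) with h | h
    · rw [show (∑ x : GaloisField 2 n, sgn ((if u 0 = 1 then g x else f x) + Tr ((ν + s) * x)))
          = walsh f (ν + s) from
        Finset.sum_congr rfl fun x _ => by
          rw [h, if_neg (by decide : ¬((0 : ZMod 2) = 1))]]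
      rw [hfd (ν + s)]
      congr 1
      have hAs' := hAs (fun i => u i.succ) ν
      rw [hs, hAs', sgn_add]
      congr 1
      rw [hφ, Fin.sum_univ_succ]
      simp only [Fin.cons_zero, Fin.cons_succ, h, zero_mul, zero_add]
    · rw [show (∑ x : GaloisField 2 n, sgn ((if u 0 = 1 then g x else f x) + Tr ((ν + s) * x)))
          = walsh g (ν + s) from
        Finset.sum_congr rfl fun x _ => by rw [h, if_pos rfl]]
      rw [hgd (ν + s)]
      congr 1
      have hBs' := hBs (fun i => u i.succ) ν
      rw [hs, hBs']
      rw [hφ, Fin.sum_univ_succ]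
      simp only [Fin.cons_zero, Fin.cons_succ, h, one_mul]
      exact sgn_gs_helper (fs ν) (gs ν) _
  -- outer computation
  have houter : (2 : ℤ) ^ (k + 1) *
        walsh (fun x => f x + F (Fin.cons (f x + g x) (fun i => Tr (μ i * x)))) ν
      = 2 ^ (k + 1) * (2 ^ m * sgn (fs ν + F φν)) := by
    calc (2 : ℤ) ^ (k + 1) *
          walsh (fun x => f x + F (Fin.cons (f x + g x) (fun i => Tr (μ i * x)))) ν
        = ∑ x : GaloisField 2 n, (2 : ℤ) ^ (k + 1) *
            sgn ((f x + F (Fin.cons (f x + g x) (fun i => Tr (μ i * x)))) + Tr (ν * x)) := by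
          simp only [walsh, Finset.mul_sum]
      _ = ∑ x : GaloisField 2 n, ∑ u : Fin (k + 1) → ZMod 2,
            (∑ z : Fin (k + 1) → ZMod 2, sgn (F z + ∑ i, u i * z i)) *
              sgn ((f x + Tr (ν * x)) +
                ∑ i : Fin (k + 1),
                  u i * (Fin.cons (f x + g x) (fun j => Tr (μ j * x)) : Fin (k + 1) → ZMod 2) i) := by
          apply Finset.sum_congr rfl
          intro x _
          have e1 : (f x + F (Fin.cons (f x + g x) (fun i => Tr (μ i * x)))) + Tr (ν * x)
              = (f x + Tr (ν * x)) + F (Fin.cons (f x + g x) (fun i => Tr (μ i * x))) := by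
            ring
          rw [e1, sgn_add,
            show (2 : ℤ) ^ (k + 1) * (sgn (f x + Tr (ν * x)) *
                sgn (F (Fin.cons (f x + g x) (fun i => Tr (μ i * x)))))
              = ((2 : ℤ) ^ (k + 1) * sgn (F (Fin.cons (f x + g x) (fun i => Tr (μ i * x))))) *
                sgn (f x + Tr (ν * x)) from by ring,
            ← fourier2 F (Fin.cons (f x + g x) (fun i => Tr (μ i * x))), Finset.sum_mul]
          apply Finset.sum_congr rfl
          intro u _
          rw [mul_assoc]
          congr 1
          rw [← sgn_add, add_comm]
      _ = ∑ u : Fin (k + 1) → ZMod 2, ∑ x : GaloisField 2 n,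
            (∑ z : Fin (k + 1) → ZMod 2, sgn (F z + ∑ i, u i * z i)) *
              sgn ((f x + Tr (ν * x)) +
                ∑ i : Fin (k + 1),
                  u i * (Fin.cons (f x + g x) (fun j => Tr (μ j * x)) : Fin (k + 1) → ZMod 2) i) :=
          Finset.sum_comm
      _ = ∑ u : Fin (k + 1) → ZMod 2,
            (∑ z : Fin (k + 1) → ZMod 2, sgn (F z + ∑ i, u i * z i)) *
              (2 ^ m * (sgn (fs ν) * sgn (∑ i : Fin (k + 1), u i * φν i))) := by
          apply Finset.sum_congr rfl
          intro u _
          rw [← Finset.mul_sum, inner u]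
      _ = (2 ^ m * sgn (fs ν)) * ∑ u : Fin (k + 1) → ZMod 2,
            (∑ z : Fin (k + 1) → ZMod 2, sgn (F z + ∑ i, u i * z i)) *
              sgn (∑ i : Fin (k + 1), u i * φν i) := by
          rw [Finset.mul_sum]
          apply Finset.sum_congr rfl
          intro u _
          ring
      _ = (2 ^ m * sgn (fs ν)) * (2 ^ (k + 1) * sgn (F φν)) := by rw [fourier2 F φν]
      _ = 2 ^ (k + 1) * (2 ^ m * sgn (fs ν + F φν)) := by rw [sgn_add]; ring
  exact mul_left_cancel₀ (by positivity : ((2 : ℤ) ^ (k + 1)) ≠ 0) houter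

/-- Corollary: with `r = k + 1`, first coordinate `f + g` and the others `Tr(μ_i x)`: under
conditions (A) and (B), `h(x) = f(x) + F(f(x)+g(x), Tr(μ_2 x), …, Tr(μ_r x))` is bent with
dual `f*(x) + F(f*(x)+g*(x), φ_2(x), …, φ_r(x))` where `φ_i(x) = f*(x)+f*(x+μ_i)`. -/
theorem statement9 {n m k : ℕ} (hn : n = 2 * m)
    (f fs g gs : GaloisField 2 n → ZMod 2)
    (hf : IsBent m f) (hfd : IsDualOf m fs f)
    (hg : IsBent m g) (hgd : IsDualOf m gs g)
    (μ : Fin k → GaloisField 2 n) (hμ : ∀ i, μ i ≠ 0)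
    (hA : ∀ i j : Fin k, i < j →
      ∀ x, fs x + fs (x + μ i) + fs (x + μ j) + fs (x + μ i + μ j) = 0)
    (hB : ∀ (ω : Fin k → ZMod 2) (x : GaloisField 2 n),
      gs (x + ∑ i, if ω i = 1 then μ i else 0)
        = gs x + (∑ i, ω i) * fs x + ∑ i, ω i * fs (x + μ i))
    (F : (Fin (k + 1) → ZMod 2) → ZMod 2) :
    IsBent m (fun x => f x + F (Fin.cons (f x + g x) (fun i => Tr (μ i * x)))) ∧
      IsDualOf m
        (fun x => fs x + F (Fin.cons (fs x + gs x) (fun i => fs x + fs (x + μ i))))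
        (fun x => f x + F (Fin.cons (f x + g x) (fun i => Tr (μ i * x)))) := by
  have hAs : ∀ (ω : Fin k → ZMod 2) (x : GaloisField 2 n),
      fs (x + ∑ i, if ω i = 1 then μ i else 0)
        = fs x + ∑ i, ω i * (fs x + fs (x + μ i)) := deriv_omega fs μ hA
  have hBs : ∀ (ω : Fin k → ZMod 2) (x : GaloisField 2 n),
      gs (x + ∑ i, if ω i = 1 then μ i else 0)
        = gs x + ∑ i, ω i * (fs x + fs (x + μ i)) := by
    intro ω x
    rw [hB ω x]
    have : (∑ i, ω i * (fs x + fs (x + μ i)))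
        = (∑ i, ω i) * fs x + ∑ i, ω i * fs (x + μ i) := by
      simp_rw [mul_add]
      rw [Finset.sum_add_distrib, Finset.sum_mul]
    rw [this, add_assoc]
  have key := main_dual f fs g gs hfd hgd μ hAs hBs F
  constructor
  · intro ν
    rcases sgn_cases (fs ν + F (Fin.cons (fs ν + gs ν) (fun i => fs ν + fs (ν + μ i)))) with
      h | h
    · left; rw [key ν, h, mul_one]
    · right; rw [key ν, h, mul_neg_one]
  · intro ν
    exact key ν
end
end
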